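/- Let X be a subshift over a finite alphabet A, let 𝒲 ⊆ L(X) be a set of words such that every finite word v ∈ L(X) is a suffix of some w ∈ 𝒲, let c be a letter not in A, and let Y be the coded subshift over the alphabet A ∪ {c} with code words {wc : w ∈ 𝒲}. Then for any words w, v ∈ L(X), F_X(w) = F_X(v) implies F_Y(w) = F_Y(v). Consequently, if X is sofic (i.e., {F_X(w) : w ∈ L(X)} is finite), then the collection {F_Y(w) : w ∈ L(Y), w contains no occurrence of c} is finite. -/

import Mathlib

/-- The finite word `w` occurs in the biinfinite sequence `x` starting at position `i`. -/
def WordAt {A : Type*} (x : ℤ → A) (i : ℤ) (w : List A) : Prop :=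
  ∀ k : ℕ, (hk : k < w.length) → x (i + k) = w.get ⟨k, hk⟩

/-- A subshift: a closed, shift-invariant subset of `A^ℤ` (with the product topology,
`A` carrying the discrete topology). -/
def IsSubshift {A : Type*} [TopologicalSpace A] (X : Set (ℤ → A)) : Prop :=
  IsClosed X ∧ (fun x : ℤ → A => fun i => x (i + 1)) '' X = X

/-- `w` belongs to the language of `X`: `w` occurs in some point of `X`. -/
def InLang {A : Type*} (X : Set (ℤ → A)) (w : List A) : Prop :=
  ∃ x ∈ X, ∃ i : ℤ, WordAt x i w

/-- The follower set of the word `w` in `X`: all right-infinite sequences `s`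
such that `ws` occurs in some point of `X`. -/
def Follower {A : Type*} (X : Set (ℤ → A)) (w : List A) : Set (ℕ → A) :=
  {s | ∃ x ∈ X, ∃ i : ℤ, WordAt x i w ∧ ∀ k : ℕ, x (i + w.length + k) = s k}

/-- `F_X(n)`: the collection of follower sets of words of length `n` in `X`. -/
def FollowerSets {A : Type*} (X : Set (ℤ → A)) (n : ℕ) : Set (Set (ℕ → A)) :=
  {F | ∃ w : List A, w.length = n ∧ InLang X w ∧ Follower X w = F}

/-- A subshift is sofic iff it has only finitely many follower sets. -/
def Sofic {A : Type*} (X : Set (ℤ → A)) : Prop :=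
  {F | ∃ w : List A, InLang X w ∧ Follower X w = F}.Finite

/-- The discrete topology on `Option A`. -/
instance optionTopologicalSpace {A : Type*} : TopologicalSpace (Option A) := ⊥

instance optionDiscreteTopology {A : Type*} : DiscreteTopology (Option A) := ⟨rfl⟩

/-- `x` is a biinfinite concatenation of words from `W`. -/
def ConcatPoint {B : Type*} (W : Set (List B)) (x : ℤ → B) : Prop :=
  ∃ f : ℤ → ℤ, StrictMono f ∧ (∀ i : ℤ, ∃ n : ℤ, f n ≤ i ∧ i < f (n + 1)) ∧
    ∀ n : ℤ, ∃ w ∈ W, (w.length : ℤ) = f (n + 1) - f n ∧ WordAt x (f n) w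

/-- `Y` is the coded subshift with code words `W`: the smallest subshift containing
all biinfinite concatenations of words of `W`. -/
def IsCodedSubshift {B : Type*} [TopologicalSpace B] (W : Set (List B)) (Y : Set (ℤ → B)) : Prop :=
  IsSubshift Y ∧ {x | ConcatPoint W x} ⊆ Y ∧
    ∀ Z : Set (ℤ → B), IsSubshift Z → {x | ConcatPoint W x} ⊆ Z → Y ⊆ Z

def shiftHomeo (B : Type*) [TopologicalSpace B] : (ℤ → B) ≃ₜ (ℤ → B) where
  toFun x := fun i => x (i + 1)
  invFun x := fun i => x (i - 1)
  left_inv x := by funext i; simp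
  right_inv x := by funext i; simp
  continuous_toFun := continuous_pi fun i => continuous_apply (i + 1)
  continuous_invFun := continuous_pi fun i => continuous_apply (i - 1)

lemma concat_shift {B : Type*} (W : Set (List B)) (x : ℤ → B) (j : ℤ)
    (hx : ConcatPoint W x) : ConcatPoint W (fun i => x (i + j)) := by
  obtain ⟨f, hmono, hcov, hbl⟩ := hx
  refine ⟨fun n => f n - j, fun a b hab => by simpa using hmono hab, fun i => ?_, fun n => ?_⟩
  · obtain ⟨n, h1, h2⟩ := hcov (i + j)
    refine ⟨n, ?_, ?_⟩ <;> dsimp only <;> omega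
  · obtain ⟨w, hw, hl, hat⟩ := hbl n
    refine ⟨w, hw, by dsimp only; omega, fun k hk => ?_⟩
    have := hat k hk
    simpa [sub_add_eq_add_sub, add_sub_cancel] using this

lemma concat_shift_invariant {B : Type*} [TopologicalSpace B] (W : Set (List B)) :
    (fun x : ℤ → B => fun i => x (i + 1)) '' {x | ConcatPoint W x} = {x | ConcatPoint W x} := by
  ext x
  constructor
  · rintro ⟨y, hy, rfl⟩
    exact concat_shift W y 1 hy
  · intro hx
    refine ⟨fun i => x (i + (-1)), concat_shift W x (-1) hx, ?_⟩
    funext i; simp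

lemma closure_concat_subshift {B : Type*} [TopologicalSpace B] (W : Set (List B)) :
    IsSubshift (closure {x | ConcatPoint W x}) := by
  refine ⟨isClosed_closure, ?_⟩
  have : (fun x : ℤ → B => fun i => x (i + 1)) = ⇑(shiftHomeo B) := rfl
  rw [this, (shiftHomeo B).image_closure, ← this, concat_shift_invariant]

lemma shift_injective {B : Type*} : Function.Injective (fun x : ℤ → B => fun i => x (i + 1)) := by
  intro a b hab
  funext i
  have := congrFun hab (i - 1)
  simpa using this

lemma mem_shift {B : Type*} [TopologicalSpace B] {Y : Set (ℤ → B)} (hY : IsSubshift Y)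
    {y : ℤ → B} (hy : y ∈ Y) (j : ℤ) : (fun i => y (i + j)) ∈ Y := by
  induction j using Int.induction_on with
  | zero => simpa using hy
  | succ j ih =>
    have : (fun i => y (i + (j + 1))) = (fun x : ℤ → B => fun i => x (i + 1)) (fun i => y (i + j)) := by
      funext i; dsimp only; ring_nf
    rw [this, ← hY.2]
    exact ⟨_, ih, rfl⟩
  | pred j ih =>
    have hmem : (fun i => y (i + (-j : ℤ))) ∈ (fun x : ℤ → B => fun i => x (i + 1)) '' Y := by
      rw [hY.2]; exact ih
    obtain ⟨z, hz, hz2⟩ := hmem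
    have : z = fun i => y (i + (-j - 1)) := by
      apply shift_injective
      rw [hz2]; funext i; dsimp only; ring_nf
    rwa [← this]

lemma window {B : Type*} [TopologicalSpace B] [DiscreteTopology B] {C : Set (ℤ → B)} {y : ℤ → B}
    (hy : y ∈ closure C) (i : ℤ) (N : ℕ) :
    ∃ z ∈ C, ∀ k : ℕ, k < N → z (i + k) = y (i + k) := by
  set U : Set (ℤ → B) := ⋂ k ∈ Finset.range N, {x : ℤ → B | x (i + k) = y (i + k)} with hU
  have hopen : IsOpen U := by
    apply isOpen_biInter_finset
    intro k _
    exact (continuous_apply (A := fun _ : ℤ => B) (i + (k:ℤ))).isOpen_preimage ({y (i + k)} : Set B) (isOpen_discrete _)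
  have hyU : y ∈ U := by
    simp only [hU, Set.mem_iInter]
    intro k _; rfl
  obtain ⟨z, hz1, hz2⟩ := mem_closure_iff.mp hy U hopen hyU
  refine ⟨z, hz2, fun k hk => ?_⟩
  simp only [hU, Set.mem_iInter] at hz1
  exact hz1 k (Finset.mem_range.mpr hk)

lemma block_get {A : Type*} {z : ℤ → Option A} {g : ℤ} {u : List A}
    (h : WordAt z g (u.map some ++ [none])) :
    (∀ k : ℕ, (hk : k < u.length) → z (g + k) = some (u.get ⟨k, hk⟩)) ∧
      z (g + u.length) = none := by
  constructor
  · intro k hk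
    have := h k (by simp; omega)
    rw [this]
    rw [List.get_eq_getElem, List.getElem_append_left (by simpa using hk)]
    simp
  · have := h u.length (by simp)
    rw [this]
    rw [List.get_eq_getElem, List.getElem_append_right (by simp)]
    simp

lemma locate {A : Type*} {W : Set (List A)} {z : ℤ → Option A}
    {f : ℤ → ℤ} (hcov : ∀ i : ℤ, ∃ n : ℤ, f n ≤ i ∧ i < f (n + 1))
    (hbl : ∀ n : ℤ, ∃ w ∈ (fun w : List A => w.map some ++ [none]) '' W,
      (w.length : ℤ) = f (n + 1) - f n ∧ WordAt z (f n) w)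
    (v : List A) (i : ℤ) (hv : WordAt z i (v.map some)) :
    ∃ n : ℤ, ∃ u ∈ W, ((u.length : ℤ) + 1 = f (n + 1) - f n) ∧
      WordAt z (f n) (u.map some ++ [none]) ∧
      ∃ j : ℕ, (j : ℤ) = i - f n ∧ j + v.length ≤ u.length ∧ v <+: u.drop j := by
  obtain ⟨n, hn1, hn2⟩ := hcov i
  obtain ⟨cw, ⟨u, huW, rfl⟩, hlen, hat⟩ := hbl n
  have hlen' : (u.length : ℤ) + 1 = f (n + 1) - f n := by
    simpa using hlen
  have hg := block_get hat
  set j := (i - f n).toNat with hjdef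
  have hj : (j : ℤ) = i - f n := Int.toNat_of_nonneg (by omega)
  have hjle : (j : ℤ) < (u.length : ℤ) + 1 := by omega
  have hjv : j + v.length ≤ u.length := by
    rcases Nat.eq_zero_or_pos v.length with h0 | hpos
    · omega
    · by_contra hcon
      push_neg at hcon
      have hk0 : u.length - j < v.length := by omega
      have h1 := hv (u.length - j) (by simpa using hk0)
      have h2 : i + ((u.length - j : ℕ) : ℤ) = f n + u.length := by omega
      rw [h2, hg.2] at h1
      simp [List.get_eq_getElem] at h1
  have hmatch : ∀ k : ℕ, (hk : k < v.length) → u[j + k]'(by omega) = v[k]'hk := by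
    intro k hk
    have h1 := hv k (by simpa using hk)
    have h2 := hg.1 (j + k) (by omega)
    have h3 : i + (k : ℤ) = f n + ((j + k : ℕ) : ℤ) := by push_cast; omega
    rw [h3, h2] at h1
    simp only [List.get_eq_getElem, List.getElem_map] at h1
    exact Option.some_injective _ h1
  refine ⟨n, u, huW, hlen', hat, j, hj, hjv, ⟨u.drop (j + v.length), ?_⟩⟩
  apply List.ext_getElem
  · simp; omega
  · intro k hk1 hk2
    simp only [List.length_drop] at hk2
    rcases lt_or_ge k v.length with hkv | hkv
    · rw [List.getElem_append_left hkv, List.getElem_drop]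
      exact (hmatch k hkv).symm
    · rw [List.getElem_append_right hkv, List.getElem_drop, List.getElem_drop]
      congr 1
      omega

lemma replace {A : Type*} {X : Set (ℤ → A)} {W : Set (List A)}
    (hWL : ∀ w ∈ W, InLang X w)
    (hsuf : ∀ v : List A, InLang X v → ∃ w ∈ W, v <:+ w)
    (w v : List A) (hF : Follower X w = Follower X v)
    {z : ℤ → Option A} (hz : ConcatPoint ((fun w : List A => w.map some ++ [none]) '' W) z)
    {i : ℤ} (hw : WordAt z i (w.map some)) :
    ∃ z' : ℤ → Option A, ConcatPoint ((fun w : List A => w.map some ++ [none]) '' W) z' ∧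
      ∃ i' : ℤ, WordAt z' i' (v.map some) ∧
        ∀ k : ℕ, z' (i' + v.length + k) = z (i + w.length + k) := by
  obtain ⟨f, hmono, hcov, hbl⟩ := hz
  obtain ⟨n, u, huW, hlen, hat, j, hj, hjv, hpre⟩ := locate hcov hbl w i hw
  have hg := block_get hat
  set b := u.drop (j + w.length) with hbdef
  have hblen : b.length = u.length - (j + w.length) := by simp [hbdef]
  have hub : ∀ k : ℕ, (hk : j + w.length + k < u.length) →
      b[k]'(by simp [hbdef]; omega) = u[j + w.length + k]'hk := by
    intro k hk
    exact List.getElem_drop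
  -- the word following w inside u is in the follower set of w, hence of v
  obtain ⟨x, hxX, p, hxp⟩ := hWL u huW
  have hxw : WordAt x (p + j) w := by
    intro k hk
    have h2 := hxp (j + k) (by omega)
    rw [show p + (j : ℤ) + (k : ℤ) = p + ((j + k : ℕ) : ℤ) by push_cast; ring, h2]
    rw [List.get_eq_getElem, List.get_eq_getElem, hpre.getElem hk]
    exact List.getElem_drop.symm
  have ht : (fun k : ℕ => x (p + j + w.length + k)) ∈ Follower X w :=
    ⟨x, hxX, p + j, hxw, fun k => rfl⟩
  rw [hF] at ht
  obtain ⟨x', hx'X, q, hq1, hq2⟩ := ht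
  have hvb : InLang X (v ++ b) := by
    refine ⟨x', hx'X, q, fun k hk => ?_⟩
    simp only [List.length_append] at hk
    rw [List.get_eq_getElem]
    rcases lt_or_ge k v.length with hkv | hkv
    · rw [List.getElem_append_left hkv]
      have := hq1 k hkv
      rwa [List.get_eq_getElem] at this
    · rw [List.getElem_append_right hkv]
      have e1 := hq2 (k - v.length)
      have e2 := hxp (j + w.length + (k - v.length)) (by omega)
      have e3 : q + (v.length : ℤ) + ((k - v.length : ℕ) : ℤ) = q + (k : ℤ) := by
        push_cast [hkv]; ring
      rw [e3] at e1
      rw [e1]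
      dsimp only
      have e4 : p + (j : ℤ) + (w.length : ℤ) + ((k - v.length : ℕ) : ℤ)
          = p + ((j + w.length + (k - v.length) : ℕ) : ℤ) := by push_cast; ring
      rw [e4, e2, List.get_eq_getElem]
      exact ((hub (k - v.length) (by omega)).symm : _)
  obtain ⟨u', hu'W, a', hu'⟩ := hsuf _ hvb
  have hulen : u'.length = a'.length + v.length + b.length := by
    rw [← hu']; simp; ring
  -- construct the new point
  set d : ℤ := (u'.length : ℤ) - (u.length : ℤ) with hd
  set g : ℤ := f n - d with hgdef
  have hfn1 : f (n + 1) = g + (u'.length : ℤ) + 1 := by omega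
  set f' : ℤ → ℤ := fun m => if m ≤ n then f m - d else f m with hf'
  set z' : ℤ → Option A := fun p =>
    if p < g then z (p + d) else if p < f (n + 1) then
      ((u'.map some ++ [none]).getD (p - g).toNat none) else z p with hz'
  have hz'left : ∀ p : ℤ, p < g → z' p = z (p + d) := fun p hp => if_pos hp
  have hz'right : ∀ p : ℤ, f (n + 1) ≤ p → z' p = z p := by
    intro p hp
    rw [hz']
    dsimp only
    rw [if_neg (by omega), if_neg (by omega)]
  have hz'block : ∀ k : ℕ, (hk : k < u'.length + 1) →
      z' (g + k) = (u'.map some ++ [none])[k]'(by simpa using hk) := by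
    intro k hk
    rw [hz']
    dsimp only
    rw [if_neg (by omega), if_pos (by omega)]
    rw [show (g + (k : ℤ) - g).toNat = k by omega]
    exact List.getD_eq_getElem _ _ (by simpa using hk)
  have hf'mono : StrictMono f' := by
    apply strictMono_int_of_lt_succ
    intro m
    have hm := hmono (lt_add_one m)
    rcases lt_trichotomy m n with h | h | h
    · have e1 : f' m = f m - d := by simp only [hf']; rw [if_pos h.le]
      have e2 : f' (m + 1) = f (m + 1) - d := by simp only [hf']; rw [if_pos (by omega : m + 1 ≤ n)]
      omega
    · subst h
      have e1 : f' m = f m - d := by simp only [hf']; rw [if_pos le_rfl]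
      have e2 : f' (m + 1) = f (m + 1) := by simp only [hf']; rw [if_neg (by omega)]
      omega
    · have e1 : f' m = f m := by simp only [hf']; rw [if_neg (by omega)]
      have e2 : f' (m + 1) = f (m + 1) := by simp only [hf']; rw [if_neg (by omega)]
      omega
  have hf'cov : ∀ i : ℤ, ∃ m : ℤ, f' m ≤ i ∧ i < f' (m + 1) := by
    intro p
    rcases lt_or_ge p g with hp | hp
    · obtain ⟨m, hm1, hm2⟩ := hcov (p + d)
      have hmn : m < n := by
        by_contra hcon
        push_neg at hcon
        have := hmono.monotone hcon
        omega
      refine ⟨m, ?_, ?_⟩ <;> rw [hf'] <;> dsimp only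
      · rw [if_pos hmn.le]; omega
      · rw [if_pos (by omega)]; omega
    · rcases lt_or_ge p (f (n + 1)) with hp2 | hp2
      · refine ⟨n, ?_, ?_⟩ <;> rw [hf'] <;> dsimp only
        · rw [if_pos le_rfl]; omega
        · rw [if_neg (by omega)]; omega
      · obtain ⟨m, hm1, hm2⟩ := hcov p
        have hmn : n + 1 ≤ m := by
          by_contra hcon
          push_neg at hcon
          have := hmono.monotone (show m + 1 ≤ n + 1 by omega)
          omega
        refine ⟨m, ?_, ?_⟩ <;> rw [hf'] <;> dsimp only
        · rw [if_neg (by omega)]; omega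
        · rw [if_neg (by omega)]; omega
  have hf'bl : ∀ m : ℤ, ∃ cw ∈ (fun w : List A => w.map some ++ [none]) '' W,
      (cw.length : ℤ) = f' (m + 1) - f' m ∧ WordAt z' (f' m) cw := by
    intro m
    rcases lt_trichotomy m n with hm | hm | hm
    · obtain ⟨cw, hcwW, hlm, hatm⟩ := hbl m
      have hmn1 : f (m + 1) ≤ f n := hmono.monotone (by omega)
      refine ⟨cw, hcwW, ?_, ?_⟩
      · have e1 : f' m = f m - d := by simp only [hf']; rw [if_pos hm.le]
        have e2 : f' (m + 1) = f (m + 1) - d := by simp only [hf']; rw [if_pos (by omega : m + 1 ≤ n)]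
        omega
      · intro k hk
        have hkZ : (k : ℤ) < f (m + 1) - f m := by rw [← hlm]; exact_mod_cast hk
        have hfm : f' m = f m - d := by rw [hf']; dsimp only; rw [if_pos hm.le]
        rw [hfm, hz'left _ (by omega), show f m - d + (k : ℤ) + d = f m + k by ring]
        exact hatm k hk
    · subst hm
      refine ⟨u'.map some ++ [none], ⟨u', hu'W, rfl⟩, ?_, ?_⟩
      · rw [hf']; dsimp only; rw [if_pos le_rfl, if_neg (by omega)]
        simp; omega
      · intro k hk
        have hfm : f' m = g := by rw [hf']; dsimp only; rw [if_pos le_rfl]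
        have hk' : k < u'.length + 1 := by simpa using hk
        rw [hfm, hz'block k hk', List.get_eq_getElem]
    · obtain ⟨cw, hcwW, hlm, hatm⟩ := hbl m
      have hmn1 : f (n + 1) ≤ f m := hmono.monotone (by omega)
      refine ⟨cw, hcwW, ?_, ?_⟩
      · rw [hf']; dsimp only; rw [if_neg (by omega), if_neg (by omega)]; omega
      · intro k hk
        have hfm : f' m = f m := by rw [hf']; dsimp only; rw [if_neg (by omega)]
        rw [hfm, hz'right _ (by omega)]
        exact hatm k hk
  refine ⟨z', ⟨f', hf'mono, hf'cov, hf'bl⟩, g + a'.length, ?_, ?_⟩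
  · -- WordAt z' (g + a'.length) (v.map some)
    intro k hk
    have hk' : k < v.length := by simpa using hk
    have hKlt : a'.length + k < u'.length + 1 := by omega
    rw [show g + (a'.length : ℤ) + (k : ℤ) = g + ((a'.length + k : ℕ) : ℤ) by push_cast; ring]
    rw [hz'block _ hKlt]
    rw [List.getElem_append_left (by simp; omega), List.getElem_map]
    rw [List.get_eq_getElem, List.getElem_map]
    congr 1
    rw [List.getElem_of_eq hu'.symm (by omega), List.getElem_append_right (by omega),
      List.getElem_append_left (by simp only [Nat.add_sub_cancel_left]; omega)]
    simp only [Nat.add_sub_cancel_left]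
  · -- tail agreement
    intro k
    have hiw : i + (w.length : ℤ) + (k : ℤ) = f n + ((j + w.length + k : ℕ) : ℤ) := by
      push_cast; omega
    rcases lt_trichotomy k b.length with hkb | hkb | hkb
    · have hKlt : a'.length + v.length + k < u'.length + 1 := by omega
      rw [show g + (a'.length : ℤ) + (v.length : ℤ) + (k : ℤ)
          = g + ((a'.length + v.length + k : ℕ) : ℤ) by push_cast; ring]
      rw [hz'block _ hKlt]
      rw [List.getElem_append_left (by simp; omega), List.getElem_map]
      rw [hiw, hg.1 (j + w.length + k) (by omega), List.get_eq_getElem]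
      congr 1
      have hbk := hub k (by omega)
      rw [← hbk]
      rw [List.getElem_of_eq hu'.symm (by omega), List.getElem_append_right (by omega),
        List.getElem_append_right (by omega)]
      congr 1
      omega
    · have lhs : z' (g + (a'.length : ℤ) + (v.length : ℤ) + (k : ℤ)) = none := by
        rw [show g + (a'.length : ℤ) + (v.length : ℤ) + (k : ℤ)
            = g + ((u'.length : ℕ) : ℤ) by push_cast; omega]
        rw [hz'block _ (by omega)]
        rw [List.getElem_append_right (by simp)]
        simp
      have rhs : z (i + (w.length : ℤ) + (k : ℤ)) = none := by
        rw [show i + (w.length : ℤ) + (k : ℤ) = f n + ((u.length : ℕ) : ℤ) by push_cast; omega]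
        exact hg.2
      rw [lhs, rhs]
    · rw [hz'right (g + (a'.length : ℤ) + (v.length : ℤ) + (k : ℤ)) (by omega)]
      congr 1
      omega

lemma exists_map_some {A : Type*} (u : List (Option A)) (h : none ∉ u) :
    ∃ v : List A, u = v.map some := by
  induction u with
  | nil => exact ⟨[], rfl⟩
  | cons a l ih =>
    obtain ⟨v, hv⟩ := ih (fun hc => h (List.mem_cons_of_mem _ hc))
    match a with
    | none => exact absurd List.mem_cons_self h
    | some b => exact ⟨b :: v, by rw [hv]; rfl⟩

lemma inLang_of_wordAt_concat {A : Type*} {X : Set (ℤ → A)} {W : Set (List A)}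
    (hWL : ∀ w ∈ W, InLang X w) {z : ℤ → Option A}
    (hz : ConcatPoint ((fun w : List A => w.map some ++ [none]) '' W) z)
    {v : List A} {i : ℤ} (hv : WordAt z i (v.map some)) : InLang X v := by
  obtain ⟨f, hmono, hcov, hbl⟩ := hz
  obtain ⟨n, u, huW, -, -, j, -, hjv, hpre⟩ := locate hcov hbl v i hv
  obtain ⟨x, hxX, p, hxp⟩ := hWL u huW
  refine ⟨x, hxX, p + j, fun k hk => ?_⟩
  have h2 := hxp (j + k) (by omega)
  rw [show p + (j : ℤ) + (k : ℤ) = p + ((j + k : ℕ) : ℤ) by push_cast; ring, h2]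
  rw [List.get_eq_getElem, List.get_eq_getElem, hpre.getElem hk]
  exact List.getElem_drop.symm

lemma follower_sub {A : Type*} [Fintype A]
    {X : Set (ℤ → A)} {W : Set (List A)}
    (hWL : ∀ w ∈ W, InLang X w)
    (hsuf : ∀ v : List A, InLang X v → ∃ w ∈ W, v <:+ w)
    {Y : Set (ℤ → Option A)}
    (hY : IsCodedSubshift ((fun w : List A => w.map some ++ [none]) '' W) Y)
    (w v : List A) (hF : Follower X w = Follower X v) :
    Follower Y (w.map some) ⊆ Follower Y (v.map some) := by
  intro s hs
  obtain ⟨y, hyY, i, hyw, hys⟩ := hs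
  simp only [List.length_map] at hys
  have hYC : Y ⊆ closure {x : ℤ → Option A |
      ConcatPoint ((fun w : List A => w.map some ++ [none]) '' W) x} :=
    hY.2.2 _ (closure_concat_subshift _) subset_closure
  set v' := v.map some with hv'
  set tgt : ℕ → Option A := fun k =>
    if h : k < v'.length then v'[k] else s (k - v'.length) with htgt
  set K : ℕ → Set (ℤ → Option A) := fun m =>
    Y ∩ ⋂ k ∈ Finset.range (v'.length + m), {x : ℤ → Option A | x ((k : ℕ) : ℤ) = tgt k}
    with hK
  have hKne : ∀ m : ℕ, (K m).Nonempty := by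
    intro m
    obtain ⟨z, hzC, hzy⟩ := window (hYC hyY) i (w.length + m)
    have hzw : WordAt z i (w.map some) := by
      intro k hk
      rw [hzy k (by simp only [List.length_map] at hk; omega)]
      exact hyw k hk
    obtain ⟨z', hz'C, i', hz'v, hz'tail⟩ := replace hWL hsuf w v hF hzC hzw
    refine ⟨fun p => z' (p + i'), ⟨mem_shift hY.1 (hY.2.1 hz'C) i', ?_⟩⟩
    simp only [Set.mem_iInter, Set.mem_setOf_eq, Finset.mem_range]
    intro k hk
    rcases lt_or_ge k v'.length with hkv | hkv
    · have := hz'v k (by simpa [hv'] using hkv)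
      rw [show (k : ℤ) + i' = i' + (k : ℤ) by ring, this]
      simp only [htgt]
      rw [dif_pos hkv, List.get_eq_getElem]
    · have hkv2 : k - v'.length < m := by omega
      have e1 := hz'tail (k - v'.length)
      have e2 : (k : ℤ) + i' = i' + (v.length : ℤ) + ((k - v'.length : ℕ) : ℤ) := by
        simp only [hv', List.length_map] at hkv ⊢
        push_cast [hkv]
        ring
      rw [e2, e1]
      have e3 := hzy (w.length + (k - v'.length)) (by omega)
      rw [show i + (w.length : ℤ) + ((k - v'.length : ℕ) : ℤ)
          = i + ((w.length + (k - v'.length) : ℕ) : ℤ) by push_cast; ring, e3,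
        ← show i + (w.length : ℤ) + ((k - v'.length : ℕ) : ℤ)
          = i + ((w.length + (k - v'.length) : ℕ) : ℤ) by push_cast; ring, hys]
      simp only [htgt]
      rw [dif_neg (by omega)]
  have hKclosed : ∀ m : ℕ, IsClosed (K m) := by
    intro m
    refine IsClosed.inter hY.1.1 ?_
    refine isClosed_biInter fun k _ => ?_
    exact (isClosed_discrete ({tgt k} : Set (Option A))).preimage
      (continuous_apply (A := fun _ : ℤ => Option A) ((k : ℕ) : ℤ))
  have hKdec : ∀ m : ℕ, K (m + 1) ⊆ K m := by
    intro m
    refine Set.inter_subset_inter_right _ ?_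
    intro x hx
    simp only [Set.mem_iInter, Finset.mem_range] at hx ⊢
    intro k hk
    exact hx k (by omega)
  obtain ⟨x, hx⟩ := IsCompact.nonempty_iInter_of_sequence_nonempty_isCompact_isClosed
    K hKdec hKne ((hKclosed 0).isCompact) hKclosed
  simp only [Set.mem_iInter] at hx
  have hxY : x ∈ Y := (hx 0).1
  have hxall : ∀ k : ℕ, x ((k : ℕ) : ℤ) = tgt k := by
    intro k
    have := (hx (k + 1)).2
    simp only [Set.mem_iInter, Set.mem_setOf_eq, Finset.mem_range] at this
    exact this k (by omega)
  refine ⟨x, hxY, 0, fun k hk => ?_, fun k => ?_⟩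
  · rw [zero_add, hxall k]
    simp only [htgt]
    rw [dif_pos hk, List.get_eq_getElem]
  · have := hxall (v'.length + k)
    rw [show (0 : ℤ) + (v'.length : ℤ) + (k : ℤ) = (((v'.length + k : ℕ) : ℕ) : ℤ)
      by push_cast; ring, this]
    simp only [htgt]
    rw [dif_neg (by omega)]
    congr 1
    omega

/-- For the coded subshift `Y` built from `X`, `W` and a new letter `c = none`:
words of `L(X)` with equal follower sets in `X` have equal follower sets in `Y`;
consequently, if `X` is sofic then there are only finitely many follower sets in `Y`
of words not containing `c`. -/
theorem coded_follower_transfer {A : Type*} [Fintype A] [TopologicalSpace A]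
    [DiscreteTopology A] (X : Set (ℤ → A)) (hX : IsSubshift X)
    (W : Set (List A)) (hWL : ∀ w ∈ W, InLang X w)
    (hsuf : ∀ v : List A, InLang X v → ∃ w ∈ W, v <:+ w)
    (Y : Set (ℤ → Option A))
    (hY : IsCodedSubshift ((fun w : List A => w.map some ++ [none]) '' W) Y) :
    (∀ w v : List A, InLang X w → InLang X v → Follower X w = Follower X v →
      Follower Y (w.map some) = Follower Y (v.map some)) ∧
    (Sofic X →
      {F | ∃ u : List (Option A), InLang Y u ∧ none ∉ u ∧ Follower Y u = F}.Finite) := by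
  have h1 : ∀ w v : List A, Follower X w = Follower X v →
      Follower Y (w.map some) = Follower Y (v.map some) := fun w v hF =>
    Set.Subset.antisymm (follower_sub hWL hsuf hY w v hF) (follower_sub hWL hsuf hY v w hF.symm)
  refine ⟨fun w v _ _ hF => h1 w v hF, fun hsof => ?_⟩
  have hYC : Y ⊆ closure {x : ℤ → Option A |
      ConcatPoint ((fun w : List A => w.map some ++ [none]) '' W) x} :=
    hY.2.2 _ (closure_concat_subshift _) subset_closure
  set G : Set (ℕ → A) → Set (ℕ → Option A) := fun F =>
    ⋃ (v : List A) (_ : InLang X v ∧ Follower X v = F), Follower Y (v.map some) with hG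
  refine Set.Finite.subset (hsof.image G) ?_
  rintro F ⟨u, hu1, hu2, rfl⟩
  obtain ⟨v, rfl⟩ := exists_map_some u hu2
  obtain ⟨y, hyY, i, hyv⟩ := hu1
  obtain ⟨z, hzC, hzy⟩ := window (hYC hyY) i v.length
  have hzv : WordAt z i (v.map some) := by
    intro k hk
    rw [hzy k (by simpa using hk)]
    exact hyv k hk
  have hvX : InLang X v := inLang_of_wordAt_concat hWL hzC hzv
  refine ⟨Follower X v, ⟨v, hvX, rfl⟩, ?_⟩
  rw [hG]
  ext s
  simp only [Set.mem_iUnion]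
  constructor
  · rintro ⟨v', ⟨h1', h2'⟩, h3⟩
    rwa [h1 v' v h2'] at h3
  · intro h
    exact ⟨v, ⟨hvX, rfl⟩, h⟩
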